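/- For every integer m ≥ 1 one has the equality sup{ |{t ∈ [0,∞) : |Λ_m f(t)| ≥ 1}| / ∫₀^∞ |f(t)| dt : f ∈ F^sp_m } = sup{ W(b,d,m) : (b,d) ∈ S_m }. -/

import Mathlib

open MeasureTheory Real Set

/-- The operator `Λ_m`. -/
noncomputable def Lam (m : ℕ) (f : ℝ → ℝ) (t : ℝ) : ℝ :=
  ((1 + (m : ℝ)) / t ^ (1 + (m : ℝ) / 2)) * (∫ s in (0:ℝ)..t, f s * s ^ ((m : ℝ) / 2)) - f t

/-- The coefficient `D(b,m) = (2(1+m)/m)(2 b^{-m/2} - 1)`. -/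
noncomputable def Dcoef (m : ℕ) (b : ℝ) : ℝ :=
  (2 * (1 + (m : ℝ)) / (m : ℝ)) * (2 * b ^ (-(m : ℝ) / 2) - 1)

/-- The parameter set `S_m`. -/
def Sset (m : ℕ) : Set (ℝ × ℝ) :=
  {p : ℝ × ℝ | 1 < p.1 ∧ p.1 < p.2 ∧ 0 < Dcoef m p.1 ∧
    -(2 + (m : ℝ)) / (m : ℝ) + Dcoef m p.1 * p.1 ^ ((m : ℝ) / 2) < 0 ∧
    0 < -(2 + (m : ℝ)) / (m : ℝ) + Dcoef m p.1 * p.2 ^ ((m : ℝ) / 2) ∧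
    -(2 + (m : ℝ)) / (m : ℝ) + Dcoef m p.1 * p.2 ^ ((m : ℝ) / 2) < 2}

/-- The function `f_{b,d,m}` from the class `F^sp_m`. -/
noncomputable def fsp (m : ℕ) (b d t : ℝ) : ℝ :=
  if 1 < t ∧ t ≤ b then (2 + (m : ℝ)) / (m : ℝ) - (2 * (1 + (m : ℝ)) / (m : ℝ)) * t ^ ((m : ℝ) / 2)
  else if b < t ∧ t ≤ d then -(2 + (m : ℝ)) / (m : ℝ) + Dcoef m b * t ^ ((m : ℝ) / 2)
  else 0

/-- `t₀(b,m)`. -/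
noncomputable def t0 (m : ℕ) (b : ℝ) : ℝ :=
  ((2 + (m : ℝ)) / (2 * (1 + (m : ℝ)))) ^ (2 / (m : ℝ)) *
    (2 * b ^ (-(m : ℝ) / 2) - 1) ^ (-(2 / (m : ℝ)))

/-- The denominator of `W(b,d,m)`. -/
noncomputable def denom (m : ℕ) (b d : ℝ) : ℝ :=
  (m : ℝ) / (2 + (m : ℝ)) - ((2 + (m : ℝ)) / (m : ℝ)) * d - (2 * (m : ℝ) / (2 + (m : ℝ))) * b
    + (4 * (1 + (m : ℝ)) / ((m : ℝ) * (2 + (m : ℝ)))) * (2 * b ^ (-(m : ℝ) / 2) - 1)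
      * d ^ (1 + (m : ℝ) / 2)
    + 2 * t0 m b

/-- `W(b,d,m)`. -/
noncomputable def Wf (m : ℕ) (b d : ℝ) : ℝ := (d - 1) / denom m b d

/-- The weak-type ratio of `f_{b,d,m}` under `Λ_m`. -/
noncomputable def ratio (m : ℕ) (b d : ℝ) : ℝ :=
  (MeasureTheory.volume {t : ℝ | 0 ≤ t ∧ 1 ≤ |Lam m (fsp m b d) t|}).toReal /
    ∫ t in Set.Ici (0 : ℝ), |fsp m b d t|

/-- The restricted weak-type constant of `Λ_m` over the class `F^sp_m`. -/
noncomputable def Rsp (m : ℕ) : ℝ :=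
  sSup {r : ℝ | ∃ b d : ℝ, (b, d) ∈ Sset m ∧ r = ratio m b d}

/-!
Write `p = m/2` and `f = f_{b,d,m}`. On `(1, b]` the moment `∫₀ᵗ f(s) s^p ds` equals
`t^{1+p} (f(t) + 1) / (1 + m)` and on `(b, d]` it equals `t^{1+p} (f(t) - 1) / (1 + m)`, so
`Λ_m f ≡ 1` on `(1, b]` and `Λ_m f ≡ -1` on `(b, d]`. It vanishes on `[0, 1]` and is constant
after `d`, so `Λ_m f = 0` on `[0, 1]` and `Λ_m f(t) = (d/t)^{1+p} (f(d) - 1)` for `t > d`, where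
`0 < f(d) < 2`. Hence `{t ≥ 0 : |Λ_m f(t)| ≥ 1} = (1, d]`. Splitting `∫ |f|` at `b` and at the
zero `t₀(b, m)` of `f` on `(b, d]` gives the denominator of `W(b, d, m)`, so the ratio of `f`
is exactly `W(b, d, m)` for every `(b, d) ∈ S_m`.
-/

theorem rpow_two_mul_add_one {x : ℝ} (hx : 0 < x) (p : ℝ) :
    x ^ (2 * p + 1) = x ^ p * x ^ p * x := by
  rw [rpow_add_one hx.ne', two_mul, rpow_add hx]

theorem integral_const_add_mul_rpow {p : ℝ} (hp : -1 < p) (α β u v : ℝ) :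
    ∫ s in u..v, (α + β * s ^ p) = α * (v - u) + β * (v ^ (p + 1) - u ^ (p + 1)) / (p + 1) := by
  rw [intervalIntegral.integral_add intervalIntegrable_const
      ((intervalIntegral.intervalIntegrable_rpow' hp).const_mul β),
    intervalIntegral.integral_const, intervalIntegral.integral_const_mul,
    integral_rpow (Or.inl hp), smul_eq_mul]
  ring

theorem integral_const_add_mul_rpow_mul_rpow {p u v : ℝ} (hp : -1 < 2 * p) (α β : ℝ)
    (hu : 0 ≤ u) (huv : u ≤ v) :
    ∫ s in u..v, (α + β * s ^ p) * s ^ p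
      = α * (v ^ (p + 1) - u ^ (p + 1)) / (p + 1)
        + β * (v ^ (2 * p + 1) - u ^ (2 * p + 1)) / (2 * p + 1) := by
  have hp' : -1 < p := by linarith
  rw [intervalIntegral.integral_congr_Ioo_of_le huv
      (g := fun s => α * s ^ p + β * s ^ (2 * p)) fun s hs => by
        simp only [two_mul, rpow_add (hu.trans_lt hs.1)]; ring,
    intervalIntegral.integral_add ((intervalIntegral.intervalIntegrable_rpow' hp').const_mul α)
      ((intervalIntegral.intervalIntegrable_rpow' hp).const_mul β),
    intervalIntegral.integral_const_mul, intervalIntegral.integral_const_mul,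
    integral_rpow (Or.inl hp'), integral_rpow (Or.inl hp)]
  ring

section fsp

variable {m : ℕ} {b d t : ℝ}

theorem fsp_of_le_one (hb : 1 ≤ b) (ht : t ≤ 1) : fsp m b d t = 0 := by
  rw [fsp, if_neg (by intro h; linarith [h.1]), if_neg (by intro h; linarith [h.1])]

theorem fsp_of_lt (hbd : b ≤ d) (ht : d < t) : fsp m b d t = 0 := by
  rw [fsp, if_neg (by intro h; linarith [h.2]), if_neg (by intro h; linarith [h.2])]

theorem fsp_of_mem_Ioc_one (h1 : 1 < t) (h2 : t ≤ b) :
    fsp m b d t = (2 + (m : ℝ)) / m - (2 * (1 + (m : ℝ)) / m) * t ^ ((m : ℝ) / 2) := by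
  rw [fsp, if_pos ⟨h1, h2⟩]

theorem fsp_of_mem_Ioc (h1 : b < t) (h2 : t ≤ d) :
    fsp m b d t = -(2 + (m : ℝ)) / m + Dcoef m b * t ^ ((m : ℝ) / 2) := by
  rw [fsp, if_neg fun h => h.2.not_gt h1, if_pos ⟨h1, h2⟩]

theorem fsp_eq_indicator :
    fsp m b d = (Ioc 1 b).indicator
        (fun t => (2 + (m : ℝ)) / m - (2 * (1 + (m : ℝ)) / m) * t ^ ((m : ℝ) / 2))
      + (Ioc b d).indicator (fun t => -(2 + (m : ℝ)) / m + Dcoef m b * t ^ ((m : ℝ) / 2)) := by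
  ext t
  simp only [fsp, Pi.add_apply, indicator_apply, mem_Ioc]
  split_ifs with h₁ h₂ h₂ <;> first | linarith [h₁.2, h₂.1] | ring

theorem integrable_fsp_mul {h : ℝ → ℝ} (hh : Continuous h) :
    Integrable (fun t => fsp m b d t * h t) := by
  have hc : Continuous fun t : ℝ => t ^ ((m : ℝ) / 2) := continuous_rpow_const (by positivity)
  simp only [fsp_eq_indicator, Pi.add_apply, add_mul, ← indicator_mul_left]
  exact ((by fun_prop : Continuous _).continuousOn.integrableOn_Icc.mono_set Ioc_subset_Icc_self
      |>.integrable_indicator measurableSet_Ioc).add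
    ((by fun_prop : Continuous _).continuousOn.integrableOn_Icc.mono_set Ioc_subset_Icc_self
      |>.integrable_indicator measurableSet_Ioc)

end fsp

section t0

variable {m : ℕ} {b s : ℝ}

theorem Dcoef_mul_rpow_self (hb : 0 < b) :
    Dcoef m b * b ^ ((m : ℝ) / 2) = 2 * (1 + (m : ℝ)) / m * (2 - b ^ ((m : ℝ) / 2)) := by
  have := (rpow_pos_of_pos hb ((m : ℝ) / 2)).ne'
  rw [Dcoef, neg_div, rpow_neg hb.le]
  field_simp

theorem sub_one_pos_of_Dcoef_pos (hD : 0 < Dcoef m b) : 0 < 2 * b ^ (-(m : ℝ) / 2) - 1 :=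
  pos_of_mul_pos_right hD (by positivity)

theorem t0_pos (hD : 0 < Dcoef m b) : 0 < t0 m b := by
  unfold t0
  have := sub_one_pos_of_Dcoef_pos hD
  positivity

theorem Dcoef_mul_t0_rpow (hm : m ≠ 0) (hD : 0 < Dcoef m b) :
    Dcoef m b * t0 m b ^ ((m : ℝ) / 2) = (2 + (m : ℝ)) / m := by
  have hX := sub_one_pos_of_Dcoef_pos hD
  have hm' : (m : ℝ) ≠ 0 := Nat.cast_ne_zero.mpr hm
  rw [t0, mul_rpow (by positivity) (by positivity), ← rpow_mul (by positivity),
    ← rpow_mul hX.le, show 2 / (m : ℝ) * (m / 2) = 1 by field_simp,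
    show -(2 / (m : ℝ)) * (m / 2) = -1 by field_simp, rpow_one, rpow_neg_one, Dcoef]
  generalize 2 * b ^ (-(m : ℝ) / 2) - 1 = X at hX ⊢
  field_simp

theorem Dcoef_mul_rpow_lt_iff (hm : m ≠ 0) (hD : 0 < Dcoef m b) (hs : 0 ≤ s) :
    Dcoef m b * s ^ ((m : ℝ) / 2) < (2 + (m : ℝ)) / m ↔ s < t0 m b := by
  rw [← Dcoef_mul_t0_rpow hm hD, mul_lt_mul_iff_of_pos_left hD,
    rpow_lt_rpow_iff hs (t0_pos hD).le (by positivity)]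

theorem lt_Dcoef_mul_rpow_iff (hm : m ≠ 0) (hD : 0 < Dcoef m b) (hs : 0 ≤ s) :
    (2 + (m : ℝ)) / m < Dcoef m b * s ^ ((m : ℝ) / 2) ↔ t0 m b < s := by
  rw [← Dcoef_mul_t0_rpow hm hD, mul_lt_mul_iff_of_pos_left hD,
    rpow_lt_rpow_iff (t0_pos hD).le hs (by positivity)]

end t0

section moment

variable {m : ℕ} {b d t : ℝ}

theorem intervalIntegrable_fsp_mul_rpow (u v : ℝ) :
    IntervalIntegrable (fun s => fsp m b d s * s ^ ((m : ℝ) / 2)) volume u v :=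
  (integrable_fsp_mul (continuous_rpow_const (by positivity))).intervalIntegrable

theorem integral_fsp_mul_rpow_of_le_one (hb : 1 ≤ b) (ht : t ≤ 1) :
    ∫ s in (0 : ℝ)..t, fsp m b d s * s ^ ((m : ℝ) / 2) = 0 := by
  rw [intervalIntegral.integral_congr (g := fun _ => 0) fun s hs => ?_,
    intervalIntegral.integral_zero]
  simp only [fsp_of_le_one hb (hs.2.trans (max_le zero_le_one ht)), zero_mul]

theorem one_add_mul_integral_fsp_mul_rpow_of_mem_Icc_left (hm : m ≠ 0) (hb : 1 ≤ b)
    (h1 : 1 ≤ t) (h2 : t ≤ b) :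
    (1 + (m : ℝ)) * ∫ s in (0 : ℝ)..t, fsp m b d s * s ^ ((m : ℝ) / 2)
      = t ^ (1 + (m : ℝ) / 2) * (2 * (1 + (m : ℝ)) / m * (1 - t ^ ((m : ℝ) / 2))) := by
  have hm' : (m : ℝ) ≠ 0 := Nat.cast_ne_zero.mpr hm
  rw [← intervalIntegral.integral_add_adjacent_intervals (b := 1)
      (intervalIntegrable_fsp_mul_rpow _ _) (intervalIntegrable_fsp_mul_rpow _ _),
    integral_fsp_mul_rpow_of_le_one hb le_rfl, zero_add,
    intervalIntegral.integral_congr_Ioo_of_le h1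
      (g := fun s => ((2 + (m : ℝ)) / m + -(2 * (1 + (m : ℝ)) / m) * s ^ ((m : ℝ) / 2))
        * s ^ ((m : ℝ) / 2))
      fun s hs => by rw [fsp_of_mem_Ioc_one hs.1 (hs.2.le.trans h2)]; ring,
    integral_const_add_mul_rpow_mul_rpow (neg_one_lt_zero.trans_le (by positivity)) _ _
      zero_le_one h1, one_rpow, one_rpow, rpow_add_one (by positivity), rpow_two_mul_add_one
      (by positivity), rpow_one_add' (by positivity) (by positivity)]
  generalize t ^ ((m : ℝ) / 2) = T
  field_simp
  ring

theorem one_add_mul_integral_fsp_mul_rpow_of_mem_Icc_right (hm : m ≠ 0) (hb : 1 ≤ b)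
    (h1 : b ≤ t) (h2 : t ≤ d) :
    (1 + (m : ℝ)) * ∫ s in (0 : ℝ)..t, fsp m b d s * s ^ ((m : ℝ) / 2)
      = t ^ (1 + (m : ℝ) / 2) * (-(2 * (1 + (m : ℝ)) / m) + Dcoef m b * t ^ ((m : ℝ) / 2)) := by
  have hm' : (m : ℝ) ≠ 0 := Nat.cast_ne_zero.mpr hm
  have hb0 : 0 < b := by linarith
  have ht0 : 0 < t := by linarith
  rw [← intervalIntegral.integral_add_adjacent_intervals (b := b)
      (intervalIntegrable_fsp_mul_rpow _ _) (intervalIntegrable_fsp_mul_rpow _ _), mul_add,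
    one_add_mul_integral_fsp_mul_rpow_of_mem_Icc_left hm hb hb le_rfl,
    intervalIntegral.integral_congr_Ioo_of_le h1
      (g := fun s => (-(2 + (m : ℝ)) / m + Dcoef m b * s ^ ((m : ℝ) / 2)) * s ^ ((m : ℝ) / 2))
      fun s hs => by rw [fsp_of_mem_Ioc hs.1 (hs.2.le.trans h2)],
    integral_const_add_mul_rpow_mul_rpow (neg_one_lt_zero.trans_le (by positivity)) _ _
      hb0.le h1, rpow_add_one ht0.ne', rpow_add_one hb0.ne', rpow_two_mul_add_one ht0,
    rpow_two_mul_add_one hb0, rpow_one_add' ht0.le (by positivity),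
    rpow_one_add' hb0.le (by positivity)]
  have hDb := Dcoef_mul_rpow_self (m := m) hb0
  generalize t ^ ((m : ℝ) / 2) = T at hDb ⊢
  generalize b ^ ((m : ℝ) / 2) = B at hDb ⊢
  generalize Dcoef m b = D at hDb ⊢
  field_simp at hDb ⊢
  linear_combination -((1 + (m : ℝ)) * (2 + m) * b * B) * hDb

theorem integral_fsp_mul_rpow_of_le (hbd : b ≤ d) (ht : d ≤ t) :
    ∫ s in (0 : ℝ)..t, fsp m b d s * s ^ ((m : ℝ) / 2)
      = ∫ s in (0 : ℝ)..d, fsp m b d s * s ^ ((m : ℝ) / 2) := by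
  rw [← intervalIntegral.integral_add_adjacent_intervals (b := d)
      (intervalIntegrable_fsp_mul_rpow _ _) (intervalIntegrable_fsp_mul_rpow _ _),
    intervalIntegral.integral_congr_Ioo_of_le ht (g := fun _ => 0)
      fun s hs => by rw [fsp_of_lt hbd hs.1, zero_mul],
    intervalIntegral.integral_zero, add_zero]

end moment

theorem Lam_eq_sub_of_one_add_mul_integral_eq {m : ℕ} {f : ℝ → ℝ} {t g : ℝ} (ht : 0 < t)
    (h : (1 + (m : ℝ)) * ∫ s in (0 : ℝ)..t, f s * s ^ ((m : ℝ) / 2) = t ^ (1 + (m : ℝ) / 2) * g) :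
    Lam m f t = g - f t := by
  rw [Lam, div_mul_eq_mul_div, h, mul_div_cancel_left₀ _ (rpow_pos_of_pos ht _).ne']

section Lam

variable {m : ℕ} {b d t : ℝ}

theorem Lam_fsp_of_le_one (hb : 1 ≤ b) (ht : t ≤ 1) : Lam m (fsp m b d) t = 0 := by
  rw [Lam, integral_fsp_mul_rpow_of_le_one hb ht, fsp_of_le_one hb ht, mul_zero, sub_zero]

theorem Lam_fsp_of_mem_Ioc_left (hm : m ≠ 0) (h1 : 1 < t) (h2 : t ≤ b) :
    Lam m (fsp m b d) t = 1 := by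
  have hm' : (m : ℝ) ≠ 0 := Nat.cast_ne_zero.mpr hm
  rw [Lam_eq_sub_of_one_add_mul_integral_eq (by linarith)
      (one_add_mul_integral_fsp_mul_rpow_of_mem_Icc_left hm (h1.le.trans h2) h1.le h2),
    fsp_of_mem_Ioc_one h1 h2]
  field_simp
  ring

theorem Lam_fsp_of_mem_Ioc_right (hm : m ≠ 0) (hb : 1 ≤ b) (h1 : b < t) (h2 : t ≤ d) :
    Lam m (fsp m b d) t = -1 := by
  have hm' : (m : ℝ) ≠ 0 := Nat.cast_ne_zero.mpr hm
  rw [Lam_eq_sub_of_one_add_mul_integral_eq (by linarith)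
      (one_add_mul_integral_fsp_mul_rpow_of_mem_Icc_right hm hb h1.le h2),
    fsp_of_mem_Ioc h1 h2]
  field_simp
  ring

theorem Lam_fsp_of_lt (hm : m ≠ 0) (hb : 1 ≤ b) (hbd : b < d) (ht : d < t) :
    Lam m (fsp m b d) t = (d / t) ^ (1 + (m : ℝ) / 2) * (fsp m b d d - 1) := by
  have hm' : (m : ℝ) ≠ 0 := Nat.cast_ne_zero.mpr hm
  have hd0 : 0 < d := by linarith
  have hmoment := one_add_mul_integral_fsp_mul_rpow_of_mem_Icc_right hm hb hbd.le le_rfl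
  rw [← integral_fsp_mul_rpow_of_le hbd.le ht.le] at hmoment
  rw [Lam_eq_sub_of_one_add_mul_integral_eq (hd0.trans ht) (g := (d / t) ^ (1 + (m : ℝ) / 2)
      * (fsp m b d d - 1)) ?_, fsp_of_lt hbd.le ht, sub_zero]
  rw [hmoment, div_rpow hd0.le (hd0.trans ht).le, fsp_of_mem_Ioc hbd le_rfl]
  have htp := (rpow_pos_of_pos (hd0.trans ht) (1 + (m : ℝ) / 2)).ne'
  generalize t ^ (1 + (m : ℝ) / 2) = T at htp ⊢
  field_simp
  ring

theorem abs_Lam_fsp_lt_one (hm : m ≠ 0) (hb : 1 ≤ b) (hbd : b < d) (hpos : 0 < fsp m b d d)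
    (hlt : fsp m b d d < 2) (ht : d < t) : |Lam m (fsp m b d) t| < 1 := by
  have hd0 : 0 < d := by linarith
  have hdt : 0 < d / t := div_pos hd0 (hd0.trans ht)
  rw [Lam_fsp_of_lt hm hb hbd ht, abs_mul, abs_of_pos (rpow_pos_of_pos hdt _)]
  exact mul_lt_one_of_nonneg_of_lt_one_left (rpow_pos_of_pos hdt _).le
    (rpow_lt_one hdt.le ((div_lt_one (hd0.trans ht)).mpr ht) (by positivity))
    (abs_sub_lt_iff.mpr ⟨by linarith, by linarith⟩).le

theorem levelSet_Lam_fsp (hm : m ≠ 0) (hb : 1 ≤ b) (hbd : b < d) (hpos : 0 < fsp m b d d)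
    (hlt : fsp m b d d < 2) :
    {t : ℝ | 0 ≤ t ∧ 1 ≤ |Lam m (fsp m b d) t|} = Ioc 1 d := by
  ext t
  simp only [mem_ofPred_eq, mem_Ioc]
  constructor
  · rintro ⟨-, hLam⟩
    refine ⟨lt_of_not_ge fun ht => ?_, le_of_not_gt fun ht => ?_⟩
    · rw [Lam_fsp_of_le_one hb ht] at hLam
      norm_num at hLam
    · exact (abs_Lam_fsp_lt_one hm hb hbd hpos hlt ht).not_ge hLam
  · rintro ⟨h1, h2⟩
    refine ⟨by linarith, ?_⟩
    rcases le_or_gt t b with htb | hbt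
    · rw [Lam_fsp_of_mem_Ioc_left hm h1 htb, abs_one]
    · rw [Lam_fsp_of_mem_Ioc_right hm hb hbt h2, abs_neg, abs_one]

end Lam

section absIntegral

variable {m : ℕ} {b d t : ℝ}

theorem integrable_fsp : Integrable (fsp m b d) := by
  simpa using integrable_fsp_mul (m := m) (b := b) (d := d) (h := fun _ => 1) continuous_const

theorem setIntegral_Ici_abs_fsp (hb : 1 ≤ b) (hbd : b ≤ d) :
    ∫ t in Ici (0 : ℝ), |fsp m b d t| = ∫ t in (1 : ℝ)..d, |fsp m b d t| := by
  rw [intervalIntegral.integral_of_le (hb.trans hbd),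
    setIntegral_eq_of_subset_of_forall_sdiff_eq_zero measurableSet_Ici
      (fun t (ht : t ∈ Ioc 1 d) => zero_le_one.trans ht.1.le) fun t ht => ?_]
  rcases not_and_or.mp ht.2 with h | h
  · rw [fsp_of_le_one hb (not_lt.mp h), abs_zero]
  · rw [fsp_of_lt hbd (not_le.mp h), abs_zero]

theorem abs_fsp_of_mem_Ioc_left (hm : m ≠ 0) (h1 : 1 < t) (h2 : t ≤ b) :
    |fsp m b d t| = -((2 + (m : ℝ)) / m) + 2 * (1 + (m : ℝ)) / m * t ^ ((m : ℝ) / 2) := by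
  have hm' : (m : ℝ) ≠ 0 := Nat.cast_ne_zero.mpr hm
  have hB : 2 * (1 + (m : ℝ)) / m = (2 + (m : ℝ)) / m + 1 := by field_simp; ring
  have hT : 1 ≤ t ^ ((m : ℝ) / 2) := one_le_rpow h1.le (by positivity)
  have hA : 0 ≤ (2 + (m : ℝ)) / m := by positivity
  rw [fsp_of_mem_Ioc_one h1 h2, abs_of_nonpos (by rw [hB]; nlinarith)]
  ring

theorem abs_fsp_of_mem_Ioc_of_le_t0 (hm : m ≠ 0) (hb : 0 ≤ b) (hD : 0 < Dcoef m b) (h1 : b < t)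
    (h2 : t ≤ d) (ht : t ≤ t0 m b) :
    |fsp m b d t| = (2 + (m : ℝ)) / m + -Dcoef m b * t ^ ((m : ℝ) / 2) := by
  have hle := (lt_Dcoef_mul_rpow_iff hm hD (hb.trans h1.le)).not.mpr ht.not_gt
  rw [fsp_of_mem_Ioc h1 h2, abs_of_nonpos (by rw [neg_div]; linarith)]
  ring

theorem abs_fsp_of_mem_Ioc_of_t0_lt (hm : m ≠ 0) (hb : 0 ≤ b) (hD : 0 < Dcoef m b) (h1 : b < t)
    (h2 : t ≤ d) (ht : t0 m b < t) :
    |fsp m b d t| = -((2 + (m : ℝ)) / m) + Dcoef m b * t ^ ((m : ℝ) / 2) := by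
  have hlt := (lt_Dcoef_mul_rpow_iff hm hD (hb.trans h1.le)).mpr ht
  rw [fsp_of_mem_Ioc h1 h2, abs_of_pos (by rw [neg_div]; linarith), neg_div]

theorem integral_abs_fsp (hm : m ≠ 0) (hb : 1 ≤ b) (hD : 0 < Dcoef m b) (hbt : b < t0 m b)
    (htd : t0 m b < d) : ∫ t in (1 : ℝ)..d, |fsp m b d t| = denom m b d := by
  have hm' : (m : ℝ) ≠ 0 := Nat.cast_ne_zero.mpr hm
  have hb0 : 0 < b := by linarith
  have hτ0 := t0_pos hD
  have hd0 := hτ0.trans htd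
  have hp : (-1 : ℝ) < (m : ℝ) / 2 := neg_one_lt_zero.trans_le (by positivity)
  have hint (u v : ℝ) : IntervalIntegrable (fun t => |fsp m b d t|) volume u v :=
    integrable_fsp.abs.intervalIntegrable
  rw [← intervalIntegral.integral_add_adjacent_intervals (hint 1 (t0 m b)) (hint _ d),
    ← intervalIntegral.integral_add_adjacent_intervals (hint 1 b) (hint b _),
    intervalIntegral.integral_congr_Ioo_of_le hb fun t ht =>
      abs_fsp_of_mem_Ioc_left hm ht.1 ht.2.le,
    intervalIntegral.integral_congr_Ioo_of_le hbt.le fun t ht =>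
      abs_fsp_of_mem_Ioc_of_le_t0 hm hb0.le hD ht.1 (ht.2.trans htd).le ht.2.le,
    intervalIntegral.integral_congr_Ioo_of_le htd.le fun t ht =>
      abs_fsp_of_mem_Ioc_of_t0_lt hm hb0.le hD (hbt.trans ht.1) ht.2.le ht.1,
    integral_const_add_mul_rpow hp, integral_const_add_mul_rpow hp,
    integral_const_add_mul_rpow hp, one_rpow, rpow_add_one hb0.ne', rpow_add_one hτ0.ne',
    rpow_add_one hd0.ne',
    eq_div_of_mul_eq hD.ne' ((mul_comm _ _).trans (Dcoef_mul_t0_rpow hm hD)), denom,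
    rpow_one_add' hd0.le (by positivity)]
  have hX := sub_one_pos_of_Dcoef_pos hD
  simp only [Dcoef]
  rw [neg_div, rpow_neg hb0.le] at hX ⊢
  have hβ := (rpow_pos_of_pos hb0 ((m : ℝ) / 2)).ne'
  generalize b ^ ((m : ℝ) / 2) = β at hX hβ ⊢
  have h2β : 2 - β ≠ 0 := fun h => by
    rw [show β = 2 by linarith] at hX
    norm_num at hX
  generalize d ^ ((m : ℝ) / 2) = δ
  generalize t0 m b = τ
  field_simp
  ring

end absIntegral

theorem ratio_eq_Wf {m : ℕ} {b d : ℝ} (hm : m ≠ 0) (hS : (b, d) ∈ Sset m) :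
    ratio m b d = Wf m b d := by
  obtain ⟨hb, hbd, hD, hneg, hpos, hlt⟩ := hS
  dsimp only at hb hbd hD hneg hpos hlt
  have hbt : b < t0 m b := (Dcoef_mul_rpow_lt_iff hm hD (by linarith)).mp
    (by linarith [neg_div (m : ℝ) (2 + m)])
  have htd : t0 m b < d := (lt_Dcoef_mul_rpow_iff hm hD (by linarith)).mp
    (by linarith [neg_div (m : ℝ) (2 + m)])
  rw [← fsp_of_mem_Ioc hbd le_rfl] at hpos hlt
  rw [ratio, levelSet_Lam_fsp hm hb.le hbd hpos hlt, volume_Ioc,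
    ENNReal.toReal_ofReal (by linarith), setIntegral_Ici_abs_fsp hb.le hbd.le,
    integral_abs_fsp hm hb.le hD hbt htd, Wf]

/-- For every `m ≥ 1`, the restricted weak-type constant of `Λ_m` over `F^sp_m` equals
`sup{ W(b,d,m) : (b,d) ∈ S_m }`. -/
theorem stmt_14 (m : ℕ) (hm : 1 ≤ m) :
    Rsp m = sSup {w : ℝ | ∃ b d : ℝ, (b, d) ∈ Sset m ∧ w = Wf m b d} := by
  unfold Rsp
  congr 1
  ext r
  exact exists₂_congr fun b d => and_congr_right fun hS => by
    rw [ratio_eq_Wf (Nat.one_le_iff_ne_zero.mp hm) hS]
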